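/- arXiv:1007.1347 — 2 statements merged into one kernel-verified Lean document; each statement's English description precedes it below -/
import Mathlib

section
/- Let \mathfrak{g}_1 and \mathfrak{g}_2 be Lie algebras acting canonically on a symplectic manifold (M,\omega), admitting infinitesimally equivariant momentum maps J_1: M \to \mathfrak{g}_1^* and J_2: M \to \mathfrak{g}_2^*. Then the following three conditions are equivalent: (i) (\mathfrak{g}_2)_M \subseteq \ker TJ_1; (ii) (\mathfrak{g}_1)_M \subseteq \ker TJ_2; (iii) \omega(\xi_M, \eta_M) = 0 for all \xi \in \mathfrak{g}_1 and \eta \in \mathfrak{g}_2. Moreover, if these conditions hold, then the pair of momentum maps (J_1, J_2) is a weak dual pair and the two Lie algebra actions commute: [\xi_M, \eta_M] = 0 for all \xi \in \mathfrak{g}_1, \eta \in \mathfrak{g}_2. -/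
/-!
The symplectic manifold is modelled abstractly: all tangent spaces are identified with one real
vector space `V`, the symplectic form is a point-dependent alternating weakly nondegenerate
bilinear form, and the differential `d` of functions and the bracket `bkt` of vector fields are
data. Canonicity of the actions is encoded by `hcanon`, the identity
`i_{[ξ_M, η_M]} ω = -d ω(ξ_M, η_M)` valid for symplectic vector fields.

Since `d⟨J, ξ⟩ = i_{ξ_M} ω`, the kernel of `TJ` at `m` is the symplectic orthogonal of the
orbit directions `𝔤_M(m)`. Symplectic orthogonality is a symmetric relation, so
`(𝔤₂)_M ⊆ ((𝔤₁)_M)^ω` and `(𝔤₁)_M ⊆ ((𝔤₂)_M)^ω` both say `ω(ξ_M, η_M) = 0`, and taking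
orthogonals reverses inclusions, which gives the weak dual pair. Finally
`i_{[ξ_M, η_M]} ω = -d ω(ξ_M, η_M) = 0`, so `[ξ_M, η_M] = 0` by nondegeneracy.
-/

def sympOrth {V : Type*} (ω : V → V → ℝ) (A : Set V) : Set V :=
  {v | ∀ w ∈ A, ω v w = 0}

theorem sympOrth_anti {V : Type*} (ω : V → V → ℝ) {A B : Set V} (h : A ⊆ B) :
    sympOrth ω B ⊆ sympOrth ω A :=
  fun _ hv w hw => hv w (h hw)

theorem mem_sympOrth_range_iff {V ι : Type*} (ω : V → V → ℝ) (f : ι → V) {v : V} :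
    v ∈ sympOrth ω (Set.range f) ↔ ∀ i, ω v (f i) = 0 :=
  Set.forall_mem_range

theorem subset_sympOrth_comm {V : Type*} [AddCommMonoid V] [Module ℝ V]
    {ω : V →ₗ[ℝ] V →ₗ[ℝ] ℝ} (hω : ω.IsRefl) {A B : Set V} :
    A ⊆ sympOrth (fun v w => ω v w) B ↔ B ⊆ sympOrth (fun v w => ω v w) A :=
  ⟨fun h _ hw _ hv => hω.eq_zero (h hv _ hw), fun h _ hv _ hw => hω.eq_zero (h hw _ hv)⟩

theorem ker_tangent_momentum_eq_sympOrth {M V g : Type*} [AddCommGroup V] [Module ℝ V]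
    {ω : M → V →ₗ[ℝ] V →ₗ[ℝ] ℝ} (hω : ∀ m, (ω m).IsAlt) {d : (M → ℝ) → M → V →ₗ[ℝ] ℝ}
    {a : g → M → V} {J : M → g → ℝ} (hJ : ∀ ξ m, d (fun m' => J m' ξ) m = ω m (a ξ m))
    (m : M) :
    {v | ∀ ξ, d (fun m' => J m' ξ) m v = 0} =
      sympOrth (fun v w => ω m v w) (Set.range fun ξ => a ξ m) := by
  ext v
  simp only [Set.mem_ofPred_eq, mem_sympOrth_range_iff, hJ, (hω m).eq_iff]

theorem statement0_general
    (M : Type*) (V : Type*) [AddCommGroup V] [Module ℝ V]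
    -- the symplectic form, alternating and (weakly) nondegenerate
    (ω : M → V →ₗ[ℝ] V →ₗ[ℝ] ℝ)
    (halt : ∀ m v, ω m v v = 0)
    (hnondeg : ∀ m v, (∀ w, ω m v w = 0) → v = 0)
    -- exterior differential of functions on M
    (d : (M → ℝ) → M → V →ₗ[ℝ] ℝ)
    (hd0 : d (fun _ => (0 : ℝ)) = fun _ => 0)
    -- Lie bracket of vector fields on M
    (bkt : (M → V) → (M → V) → (M → V))
    -- the Lie algebras g1, g2 and their infinitesimal actions on M
    (g1 : Type*)
    (g2 : Type*)
    (a1 : g1 → M → V) (a2 : g2 → M → V)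
    -- canonicity of the actions: i_{[ξ_M,η_M]} ω = d(-ω(ξ_M,η_M))
    (hcanon : ∀ (ξ : g1) (η : g2) (m : M),
      ω m (bkt (a1 ξ) (a2 η) m) = d (fun m' => -(ω m' (a1 ξ m') (a2 η m'))) m)
    -- the momentum maps : d⟨J,ξ⟩ = i_{ξ_M}ω
    (J1 : M → g1 → ℝ) (J2 : M → g2 → ℝ)
    (hJ1 : ∀ (ξ : g1) (m : M), d (fun m' => J1 m' ξ) m = ω m (a1 ξ m))
    (hJ2 : ∀ (η : g2) (m : M), d (fun m' => J2 m' η) m = ω m (a2 η m))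
    -- kernels of the tangent maps of the momentum maps
    (kerTJ1 kerTJ2 : M → Set V)
    (hker1 : ∀ m, kerTJ1 m = {v | ∀ ξ : g1, d (fun m' => J1 m' ξ) m v = 0})
    (hker2 : ∀ m, kerTJ2 m = {v | ∀ η : g2, d (fun m' => J2 m' η) m v = 0}) :
    -- (i) ↔ (ii) and (i) ↔ (iii)
    (((∀ m (η : g2), a2 η m ∈ kerTJ1 m) ↔ (∀ m (ξ : g1), a1 ξ m ∈ kerTJ2 m)) ∧
     ((∀ m (η : g2), a2 η m ∈ kerTJ1 m) ↔
       (∀ (ξ : g1) (η : g2) (m : M), ω m (a1 ξ m) (a2 η m) = 0))) ∧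
    -- moreover, under these conditions, (J1, J2) is a weak dual pair and the
    -- Lie algebra actions commute
    ((∀ m (η : g2), a2 η m ∈ kerTJ1 m) →
      ((∀ m, sympOrth (fun v w => ω m v w) (kerTJ1 m) ⊆ kerTJ2 m) ∧
       (∀ m, sympOrth (fun v w => ω m v w) (kerTJ2 m) ⊆ kerTJ1 m) ∧
       (∀ (ξ : g1) (η : g2) (m : M), bkt (a1 ξ) (a2 η) m = 0))) := by
  have hK1 m := (hker1 m).trans (ker_tangent_momentum_eq_sympOrth halt hJ1 m)
  have hK2 m := (hker2 m).trans (ker_tangent_momentum_eq_sympOrth halt hJ2 m)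
  have i_iff_range : (∀ m (η : g2), a2 η m ∈ kerTJ1 m) ↔
      ∀ m, Set.range (fun η => a2 η m) ⊆ kerTJ1 m := by
    simp only [Set.range_subset_iff]
  have ii_iff_range : (∀ m (ξ : g1), a1 ξ m ∈ kerTJ2 m) ↔
      ∀ m, Set.range (fun ξ => a1 ξ m) ⊆ kerTJ2 m := by
    simp only [Set.range_subset_iff]
  have i_iff_ii : (∀ m (η : g2), a2 η m ∈ kerTJ1 m) ↔ (∀ m (ξ : g1), a1 ξ m ∈ kerTJ2 m) := by
    rw [i_iff_range, ii_iff_range]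
    refine forall_congr' fun m => ?_
    rw [hK1, hK2]
    exact subset_sympOrth_comm (LinearMap.IsAlt.isRefl (halt m))
  have ii_iff_iii : (∀ m (ξ : g1), a1 ξ m ∈ kerTJ2 m) ↔
      ∀ (ξ : g1) (η : g2) (m : M), ω m (a1 ξ m) (a2 η m) = 0 := by
    simp only [hK2, mem_sympOrth_range_iff]
    exact ⟨fun h ξ η m => h m ξ η, fun h m ξ η => h ξ η m⟩
  refine ⟨⟨i_iff_ii, i_iff_ii.trans ii_iff_iii⟩, fun h => ⟨fun m => ?_, fun m => ?_, ?_⟩⟩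
  · rw [hK2 m]
    exact sympOrth_anti _ (i_iff_range.mp h m)
  · rw [hK1 m]
    exact sympOrth_anti _ (ii_iff_range.mp (i_iff_ii.mp h) m)
  · intro ξ η m
    have hflat : (fun m' => -(ω m' (a1 ξ m') (a2 η m'))) = fun _ => 0 := by
      funext m'
      rw [(i_iff_ii.trans ii_iff_iii).mp h ξ η m', neg_zero]
    refine hnondeg m _ fun w => ?_
    rw [hcanon, hflat, hd0, LinearMap.zero_apply]

theorem statement0
    (M : Type*) (V : Type*) [AddCommGroup V] [Module ℝ V]
    -- the symplectic form, alternating and (weakly) nondegenerate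
    (ω : M → V →ₗ[ℝ] V →ₗ[ℝ] ℝ)
    (halt : ∀ m v, ω m v v = 0)
    (hnondeg : ∀ m v, (∀ w, ω m v w = 0) → v = 0)
    -- exterior differential of functions on M
    (d : (M → ℝ) → M → V →ₗ[ℝ] ℝ)
    (hd0 : d (fun _ => (0 : ℝ)) = fun _ => 0)
    -- Lie bracket of vector fields on M
    (bkt : (M → V) → (M → V) → (M → V))
    -- the Lie algebras g1, g2 and their infinitesimal actions on M
    (g1 : Type*) [LieRing g1] [LieAlgebra ℝ g1]
    (g2 : Type*) [LieRing g2] [LieAlgebra ℝ g2]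
    (a1 : g1 → M → V) (a2 : g2 → M → V)
    -- canonicity of the actions: i_{[ξ_M,η_M]} ω = d(-ω(ξ_M,η_M))
    (hcanon : ∀ (ξ : g1) (η : g2) (m : M),
      ω m (bkt (a1 ξ) (a2 η) m) = d (fun m' => -(ω m' (a1 ξ m') (a2 η m'))) m)
    -- the momentum maps : d⟨J,ξ⟩ = i_{ξ_M}ω
    (J1 : M → g1 → ℝ) (J2 : M → g2 → ℝ)
    (hJ1 : ∀ (ξ : g1) (m : M), d (fun m' => J1 m' ξ) m = ω m (a1 ξ m))
    (hJ2 : ∀ (η : g2) (m : M), d (fun m' => J2 m' η) m = ω m (a2 η m))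
    -- infinitesimal equivariance : ⟨J,[ξ,η]⟩ = ω(ξ_M,η_M)
    (heq1 : ∀ (ξ ξ' : g1) (m : M), J1 m ⁅ξ, ξ'⁆ = ω m (a1 ξ m) (a1 ξ' m))
    (heq2 : ∀ (η η' : g2) (m : M), J2 m ⁅η, η'⁆ = ω m (a2 η m) (a2 η' m))
    -- kernels of the tangent maps of the momentum maps
    (kerTJ1 kerTJ2 : M → Set V)
    (hker1 : ∀ m, kerTJ1 m = {v | ∀ ξ : g1, d (fun m' => J1 m' ξ) m v = 0})
    (hker2 : ∀ m, kerTJ2 m = {v | ∀ η : g2, d (fun m' => J2 m' η) m v = 0}) :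
    -- (i) ↔ (ii) and (i) ↔ (iii)
    (((∀ m (η : g2), a2 η m ∈ kerTJ1 m) ↔ (∀ m (ξ : g1), a1 ξ m ∈ kerTJ2 m)) ∧
     ((∀ m (η : g2), a2 η m ∈ kerTJ1 m) ↔
       (∀ (ξ : g1) (η : g2) (m : M), ω m (a1 ξ m) (a2 η m) = 0))) ∧
    -- moreover, under these conditions, (J1, J2) is a weak dual pair and the
    -- Lie algebra actions commute
    ((∀ m (η : g2), a2 η m ∈ kerTJ1 m) →
      ((∀ m, sympOrth (fun v w => ω m v w) (kerTJ1 m) ⊆ kerTJ2 m) ∧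
       (∀ m, sympOrth (fun v w => ω m v w) (kerTJ2 m) ⊆ kerTJ1 m) ∧
       (∀ (ξ : g1) (η : g2) (m : M), bkt (a1 ξ) (a2 η) m = 0))) :=
  statement0_general M V ω halt hnondeg d hd0 bkt g1 g2 a1 a2 hcanon J1 J2 hJ1 hJ2 kerTJ1 kerTJ2
    hker1 hker2
end

section
/- Let \mathfrak{g}_1 and \mathfrak{g}_2 be Lie algebras acting canonically on a symplectic manifold (M,\omega), admitting infinitesimally equivariant momentum maps J_1 and J_2, with (\mathfrak{g}_2)_M \subseteq \ker TJ_1. If in addition the Lie algebra action of \mathfrak{g}_2 is transitive on level sets of J_1 and the action of \mathfrak{g}_1 is transitive on level sets of J_2, i.e. (\mathfrak{g}_2)_M = \ker TJ_1 and (\mathfrak{g}_1)_M = \ker TJ_2, then the pair (J_1, J_2) is a dual pair: (\ker TJ_1)^\omega = \ker TJ_2 and (\ker TJ_2)^\omega = \ker TJ_1. -/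
theorem sympOrth_range_of_isRefl {V ι : Type*} [AddCommGroup V] [Module ℝ V]
    {B : V →ₗ[ℝ] V →ₗ[ℝ] ℝ} (hB : B.IsRefl) (f : ι → V) :
    sympOrth (fun v w => B v w) (Set.range f) = {v | ∀ i, B (f i) v = 0} := by
  ext v
  simp only [sympOrth, Set.forall_mem_range, Set.mem_ofPred_eq, hB.eq_iff]

theorem statement1_general
    (M : Type*) (V : Type*) [AddCommGroup V] [Module ℝ V]
    -- the symplectic form, alternating and (weakly) nondegenerate
    (ω : M → V →ₗ[ℝ] V →ₗ[ℝ] ℝ)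
    (halt : ∀ m v, ω m v v = 0)
    -- exterior differential of functions on M
    (d : (M → ℝ) → M → V →ₗ[ℝ] ℝ)
    -- the Lie algebras g1, g2 and their infinitesimal actions on M
    (g1 : Type*)
    (g2 : Type*)
    (a1 : g1 → M → V) (a2 : g2 → M → V)
    -- the momentum maps : d⟨J,ξ⟩ = i_{ξ_M}ω
    (J1 : M → g1 → ℝ) (J2 : M → g2 → ℝ)
    (hJ1 : ∀ (ξ : g1) (m : M), d (fun m' => J1 m' ξ) m = ω m (a1 ξ m))
    (hJ2 : ∀ (η : g2) (m : M), d (fun m' => J2 m' η) m = ω m (a2 η m))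
    -- kernels of the tangent maps of the momentum maps
    (kerTJ1 kerTJ2 : M → Set V)
    (hker1 : ∀ m, kerTJ1 m = {v | ∀ ξ : g1, d (fun m' => J1 m' ξ) m v = 0})
    (hker2 : ∀ m, kerTJ2 m = {v | ∀ η : g2, d (fun m' => J2 m' η) m v = 0})
    -- transitivity of the g2 action on level sets of J1 : (g2)_M = ker TJ1
    (htrans2 : ∀ m, kerTJ1 m = {v | ∃ η : g2, a2 η m = v})
    -- transitivity of the g1 action on level sets of J2 : (g1)_M = ker TJ2
    (htrans1 : ∀ m, kerTJ2 m = {v | ∃ ξ : g1, a1 ξ m = v}) :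
    -- (J1, J2) is a dual pair
    ∀ m, sympOrth (fun v w => ω m v w) (kerTJ1 m) = kerTJ2 m ∧
      sympOrth (fun v w => ω m v w) (kerTJ2 m) = kerTJ1 m := by
  intro m
  have hrefl : (ω m).IsRefl := LinearMap.IsAlt.isRefl (halt m)
  have hker1' : kerTJ1 m = {v | ∀ ξ, ω m (a1 ξ m) v = 0} := by simp only [hker1, hJ1]
  have hker2' : kerTJ2 m = {v | ∀ η, ω m (a2 η m) v = 0} := by simp only [hker2, hJ2]
  constructor
  · rw [htrans2 m, hker2']
    exact sympOrth_range_of_isRefl hrefl fun η => a2 η m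
  · rw [htrans1 m, hker1']
    exact sympOrth_range_of_isRefl hrefl fun ξ => a1 ξ m

theorem statement1
    (M : Type*) (V : Type*) [AddCommGroup V] [Module ℝ V]
    -- the symplectic form, alternating and (weakly) nondegenerate
    (ω : M → V →ₗ[ℝ] V →ₗ[ℝ] ℝ)
    (halt : ∀ m v, ω m v v = 0)
    (hnondeg : ∀ m v, (∀ w, ω m v w = 0) → v = 0)
    -- exterior differential of functions on M
    (d : (M → ℝ) → M → V →ₗ[ℝ] ℝ)
    -- the Lie algebras g1, g2 and their infinitesimal actions on M
    (g1 : Type*) [LieRing g1] [LieAlgebra ℝ g1]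
    (g2 : Type*) [LieRing g2] [LieAlgebra ℝ g2]
    (a1 : g1 → M → V) (a2 : g2 → M → V)
    -- the momentum maps : d⟨J,ξ⟩ = i_{ξ_M}ω
    (J1 : M → g1 → ℝ) (J2 : M → g2 → ℝ)
    (hJ1 : ∀ (ξ : g1) (m : M), d (fun m' => J1 m' ξ) m = ω m (a1 ξ m))
    (hJ2 : ∀ (η : g2) (m : M), d (fun m' => J2 m' η) m = ω m (a2 η m))
    -- infinitesimal equivariance : ⟨J,[ξ,η]⟩ = ω(ξ_M,η_M)
    (heq1 : ∀ (ξ ξ' : g1) (m : M), J1 m ⁅ξ, ξ'⁆ = ω m (a1 ξ m) (a1 ξ' m))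
    (heq2 : ∀ (η η' : g2) (m : M), J2 m ⁅η, η'⁆ = ω m (a2 η m) (a2 η' m))
    -- kernels of the tangent maps of the momentum maps
    (kerTJ1 kerTJ2 : M → Set V)
    (hker1 : ∀ m, kerTJ1 m = {v | ∀ ξ : g1, d (fun m' => J1 m' ξ) m v = 0})
    (hker2 : ∀ m, kerTJ2 m = {v | ∀ η : g2, d (fun m' => J2 m' η) m v = 0})
    -- infinitesimal invariance : (g2)_M ⊆ ker TJ1
    (hinv : ∀ m (η : g2), a2 η m ∈ kerTJ1 m)
    -- transitivity of the g2 action on level sets of J1 : (g2)_M = ker TJ1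
    (htrans2 : ∀ m, kerTJ1 m = {v | ∃ η : g2, a2 η m = v})
    -- transitivity of the g1 action on level sets of J2 : (g1)_M = ker TJ2
    (htrans1 : ∀ m, kerTJ2 m = {v | ∃ ξ : g1, a1 ξ m = v}) :
    -- (J1, J2) is a dual pair
    ∀ m, sympOrth (fun v w => ω m v w) (kerTJ1 m) = kerTJ2 m ∧
      sympOrth (fun v w => ω m v w) (kerTJ2 m) = kerTJ1 m :=
  statement1_general M V ω halt d g1 g2 a1 a2 J1 J2 hJ1 hJ2 kerTJ1 kerTJ2 hker1 hker2 htrans2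
    htrans1
end
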